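/- For the magnetization chain of the Curie-Weiss model with 0 < β ≤ 1 and s > 0, E[S_{t+1} | S_t = s] ≤ s + (1/n)(tanh(βs) - s). In particular the map t ↦ E[|S_t| 1_{τ₀ > t}] is non-increasing, where τ₀ is the first time |S_t| ≤ 1/n. -/

import Mathlib

open MeasureTheory
open scoped ENNReal

/-- Probability that the chosen site is updated to a positive spin. -/
noncomputable def pPlus (β s : ℝ) : ℝ := (1 + Real.tanh (β * s)) / 2

/-- Probability that the chosen site is updated to a negative spin. -/
noncomputable def pMinus (β s : ℝ) : ℝ := (1 - Real.tanh (β * s)) / 2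

/-- Transition probability of the magnetization chain from `s` to `s + 2/n`. -/
noncomputable def pUp (β : ℝ) (n : ℕ) (s : ℝ) : ℝ := ((1 - s) / 2) * pPlus β (s + 1 / n)

/-- Transition probability of the magnetization chain from `s` to `s - 2/n`. -/
noncomputable def pDown (β : ℝ) (n : ℕ) (s : ℝ) : ℝ := ((1 + s) / 2) * pMinus β (s - 1 / n)

/-- Holding probability of the magnetization chain at `s`. -/
noncomputable def pHold (β : ℝ) (n : ℕ) (s : ℝ) : ℝ := 1 - pUp β n s - pDown β n s

/-- One step of the magnetization chain, as a measure on `ℝ`. -/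
noncomputable def magStep (β : ℝ) (n : ℕ) (s : ℝ) : Measure ℝ :=
  ENNReal.ofReal (pUp β n s) • Measure.dirac (s + 2 / n)
    + ENNReal.ofReal (pDown β n s) • Measure.dirac (s - 2 / n)
    + ENNReal.ofReal (pHold β n s) • Measure.dirac s



lemma tanh_exp (x : ℝ) : Real.tanh x = (Real.exp (2*x) - 1)/(Real.exp (2*x) + 1) := by
  have hu : Real.exp x > 0 := Real.exp_pos x
  have h2 : Real.exp (2*x) = Real.exp x * Real.exp x := by
    rw [two_mul, Real.exp_add]
  rw [Real.tanh_eq_sinh_div_cosh, Real.sinh_eq, Real.cosh_eq, Real.exp_neg, h2]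
  have h3 : Real.exp x + (Real.exp x)⁻¹ > 0 := by positivity
  field_simp

lemma tanh_mono {a b : ℝ} (h : a ≤ b) : Real.tanh a ≤ Real.tanh b := by
  rw [tanh_exp, tanh_exp]
  have hp : (0:ℝ) < Real.exp (2*a) := Real.exp_pos _
  have hq : (0:ℝ) < Real.exp (2*b) := Real.exp_pos _
  have hpq : Real.exp (2*a) ≤ Real.exp (2*b) := Real.exp_le_exp.2 (by linarith)
  rw [div_le_div_iff₀ (by linarith) (by linarith)]
  nlinarith

lemma tanh_lt_one (x : ℝ) : Real.tanh x < 1 := by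
  rw [tanh_exp]
  have hp : (0:ℝ) < Real.exp (2*x) := Real.exp_pos _
  rw [div_lt_one (by linarith)]; linarith

lemma neg_one_lt_tanh (x : ℝ) : -1 < Real.tanh x := by
  rw [tanh_exp]
  have hp : (0:ℝ) < Real.exp (2*x) := Real.exp_pos _
  rw [lt_div_iff₀ (by linarith)]; linarith

lemma tanh_nonneg {x : ℝ} (h : 0 ≤ x) : 0 ≤ Real.tanh x := by
  have := tanh_mono h
  simpa [Real.tanh_zero] using this

lemma tanh_mid {a h : ℝ} (ha : 0 ≤ a) (hh : 0 ≤ h) :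
    Real.tanh (a + h) + Real.tanh (a - h) ≤ 2 * Real.tanh a := by
  rw [tanh_exp, tanh_exp, tanh_exp]
  have hP : Real.exp (2*(a+h)) = Real.exp (2*a) * Real.exp (2*h) := by
    rw [← Real.exp_add]; ring_nf
  have hM : Real.exp (2*(a-h)) * Real.exp (2*h) = Real.exp (2*a) := by
    rw [← Real.exp_add]; ring_nf
  set p := Real.exp (2*a) with hp'
  set q := Real.exp (2*h) with hq'
  set m := Real.exp (2*(a-h)) with hm'
  have hp1 : 1 ≤ p := by rw [hp']; exact Real.one_le_exp (by linarith)
  have hq1 : 1 ≤ q := by rw [hq']; exact Real.one_le_exp (by linarith)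
  have hm0 : 0 < m := Real.exp_pos _
  rw [hP]
  rw [div_add_div _ _ (by positivity) (by positivity), mul_div_assoc',
    div_le_div_iff₀ (by positivity) (by positivity)]
  rw [← hM]
  have h1 : (0:ℝ) ≤ m * q - 1 := by nlinarith
  nlinarith [mul_nonneg (mul_nonneg hm0.le h1) (sq_nonneg (q-1))]

lemma tanh_le_self {x : ℝ} (h : 0 ≤ x) : Real.tanh x ≤ x := by
  have key : ∀ y : ℝ, 0 ≤ y → Real.sinh y ≤ y * Real.cosh y := by
    intro y hy
    have hderiv : ∀ z : ℝ, HasDerivAt (fun w => w * Real.cosh w - Real.sinh w)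
        (z * Real.sinh z) z := by
      intro z
      have h1 : HasDerivAt (fun w : ℝ => w * Real.cosh w)
          (1 * Real.cosh z + z * Real.sinh z) z :=
        (hasDerivAt_id z).mul (Real.hasDerivAt_cosh z)
      have := h1.sub (Real.hasDerivAt_sinh z)
      exact this.congr_deriv (by ring)
    have hmono : MonotoneOn (fun w : ℝ => w * Real.cosh w - Real.sinh w) (Set.Ici 0) := by
      apply monotoneOn_of_deriv_nonneg (convex_Ici 0)
        (Continuous.continuousOn (by continuity))
      · intro z hz
        exact (hderiv z).differentiableAt.differentiableWithinAt
      · intro z hz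
        rw [(hderiv z).deriv]
        exact mul_nonneg (le_of_lt (by simpa using hz)) (Real.sinh_nonneg_iff.2 (le_of_lt (by simpa using hz)))
    have := hmono (Set.self_mem_Ici) (Set.mem_Ici.2 hy) hy
    simp at this
    linarith [this]
  rw [Real.tanh_eq_sinh_div_cosh, div_le_iff₀ (Real.cosh_pos x)]
  exact key x h

lemma pPlus_pos (β s : ℝ) : 0 < pPlus β s := by
  have := neg_one_lt_tanh (β * s); unfold pPlus; linarith
lemma pPlus_lt_one (β s : ℝ) : pPlus β s < 1 := by
  have := tanh_lt_one (β * s); unfold pPlus; linarith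
lemma pMinus_pos (β s : ℝ) : 0 < pMinus β s := by
  have := tanh_lt_one (β * s); unfold pMinus; linarith
lemma pMinus_lt_one (β s : ℝ) : pMinus β s < 1 := by
  have := neg_one_lt_tanh (β * s); unfold pMinus; linarith

lemma pUp_nonneg {β s : ℝ} {n : ℕ} (hs : s ≤ 1) : 0 ≤ pUp β n s :=
  mul_nonneg (by linarith) (pPlus_pos _ _).le
lemma pUp_le {β s : ℝ} {n : ℕ} (hs : s ≤ 1) : pUp β n s ≤ (1 - s)/2 := by
  have h1 := pPlus_lt_one β (s + 1/n)
  have h2 := pPlus_pos β (s + 1/n)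
  unfold pUp; nlinarith
lemma pDown_nonneg {β s : ℝ} {n : ℕ} (hs : -1 ≤ s) : 0 ≤ pDown β n s :=
  mul_nonneg (by linarith) (pMinus_pos _ _).le
lemma pDown_le {β s : ℝ} {n : ℕ} (hs : -1 ≤ s) : pDown β n s ≤ (1 + s)/2 := by
  have h1 := pMinus_lt_one β (s - 1/n)
  have h2 := pMinus_pos β (s - 1/n)
  unfold pDown; nlinarith
lemma pHold_nonneg {β s : ℝ} {n : ℕ} (hs1 : -1 ≤ s) (hs2 : s ≤ 1) : 0 ≤ pHold β n s := by
  have := pUp_le (β := β) (n := n) hs2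
  have := pDown_le (β := β) (n := n) hs1
  unfold pHold; linarith
lemma pUp_pos {β s : ℝ} {n : ℕ} (hs : s < 1) : 0 < pUp β n s :=
  mul_pos (by linarith) (pPlus_pos _ _)
lemma pDown_pos {β s : ℝ} {n : ℕ} (hs : -1 < s) : 0 < pDown β n s :=
  mul_pos (by linarith) (pMinus_pos _ _)

lemma lintegral_magStep (β : ℝ) (n : ℕ) (s : ℝ) (f : ℝ → ℝ≥0∞) :
    ∫⁻ x, f x ∂(magStep β n s)
      = ENNReal.ofReal (pUp β n s) * f (s + 2/n)
        + ENNReal.ofReal (pDown β n s) * f (s - 2/n)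
        + ENNReal.ofReal (pHold β n s) * f s := by
  simp [magStep, lintegral_add_measure, lintegral_smul_measure, lintegral_dirac]

lemma integrable_dirac_fun {f : ℝ → ℝ} (hf : Measurable f) (a : ℝ) :
    Integrable f (Measure.dirac a) := by
  refine ⟨hf.aestronglyMeasurable, ?_⟩
  rw [HasFiniteIntegral]
  have : ∫⁻ x, ‖f x‖ₑ ∂(Measure.dirac a) = ‖f a‖ₑ := lintegral_dirac _ _
  rw [this]
  exact enorm_lt_top

lemma integral_magStep {β s : ℝ} {n : ℕ} (hs1 : -1 ≤ s) (hs2 : s ≤ 1) :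
    ∫ x, x ∂(magStep β n s)
      = pUp β n s * (s + 2/n) + pDown β n s * (s - 2/n) + pHold β n s * s := by
  have hid : Measurable (fun x : ℝ => x) := measurable_id
  have i1 : Integrable (fun x : ℝ => x)
      (ENNReal.ofReal (pUp β n s) • Measure.dirac (s + 2/n)) :=
    (integrable_dirac_fun hid _).smul_measure ENNReal.ofReal_ne_top
  have i2 : Integrable (fun x : ℝ => x)
      (ENNReal.ofReal (pDown β n s) • Measure.dirac (s - 2/n)) :=
    (integrable_dirac_fun hid _).smul_measure ENNReal.ofReal_ne_top
  have i3 : Integrable (fun x : ℝ => x)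
      (ENNReal.ofReal (pHold β n s) • Measure.dirac s) :=
    (integrable_dirac_fun hid _).smul_measure ENNReal.ofReal_ne_top
  rw [magStep, integral_add_measure (i1.add_measure i2) i3, integral_add_measure i1 i2,
    integral_smul_measure, integral_smul_measure, integral_smul_measure,
    integral_dirac, integral_dirac, integral_dirac,
    ENNReal.toReal_ofReal (pUp_nonneg hs2), ENNReal.toReal_ofReal (pDown_nonneg hs1),
    ENNReal.toReal_ofReal (pHold_nonneg hs1 hs2)]
  simp [smul_eq_mul]

lemma tanh_ge_self {x : ℝ} (h : x ≤ 0) : x ≤ Real.tanh x := by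
  have := tanh_le_self (x := -x) (by linarith)
  rw [Real.tanh_neg] at this; linarith

lemma tanh_mid' {a h : ℝ} (ha : a ≤ 0) (hh : 0 ≤ h) :
    2 * Real.tanh a ≤ Real.tanh (a + h) + Real.tanh (a - h) := by
  have := tanh_mid (a := -a) (h := h) (by linarith) hh
  have e1 : -a + h = -(a - h) := by ring
  have e2 : -a - h = -(a + h) := by ring
  rw [e1, e2, Real.tanh_neg, Real.tanh_neg, Real.tanh_neg] at this
  linarith

lemma drift_le {β s : ℝ} {n : ℕ} (hβ0 : 0 < β) (hn : 1 ≤ n) (hs0 : 0 < s) (hs2 : s ≤ 1) :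
    ∫ x, x ∂(magStep β n s) ≤ s + (1/n) * (Real.tanh (β * s) - s) := by
  have hn0 : (0:ℝ) < (n:ℝ) := by
    have : 0 < n := hn
    exact_mod_cast this
  have he0 : (0:ℝ) < 1/(n:ℝ) := by positivity
  rw [integral_magStep (by linarith) hs2]
  set P := Real.tanh (β * (s + 1/n)) with hP
  set M := Real.tanh (β * (s - 1/n)) with hM
  set T := Real.tanh (β * s) with hT
  have hPM : P + M ≤ 2 * T := by
    have := tanh_mid (a := β * s) (h := β * (1/(n:ℝ))) (by positivity) (by positivity)
    have e1 : β * s + β * (1/(n:ℝ)) = β * (s + 1/n) := by ring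
    have e2 : β * s - β * (1/(n:ℝ)) = β * (s - 1/n) := by ring
    rw [e1, e2] at this
    exact this
  have hMP : M ≤ P := tanh_mono (by nlinarith)
  unfold pHold pUp pDown pPlus pMinus
  rw [← hP, ← hM]
  have key : P + M - s*(P-M) - 2*T ≤ 0 := by
    nlinarith [mul_nonneg hs0.le (sub_nonneg.2 hMP)]
  have hprod := mul_nonpos_of_nonneg_of_nonpos he0.le key
  have expand : (1 - s) / 2 * ((1 + P) / 2) * (s + 2 / ↑n) + (1 + s) / 2 * ((1 - M) / 2) * (s - 2 / ↑n) +
      (1 - (1 - s) / 2 * ((1 + P) / 2) - (1 + s) / 2 * ((1 - M) / 2)) * s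
      - (s + 1 / ↑n * (T - s)) = (1/2) * (1 / (n:ℝ) * (P + M - s * (P - M) - 2 * T)) := by
    ring
  linarith [expand, hprod]

lemma drift_le_self {β s : ℝ} {n : ℕ} (hβ0 : 0 < β) (hβ1 : β ≤ 1) (hn : 1 ≤ n)
    (hs0 : 0 < s) (hs2 : s ≤ 1) : ∫ x, x ∂(magStep β n s) ≤ s := by
  have hn0 : (0:ℝ) < (n:ℝ) := by
    have : 0 < n := hn
    exact_mod_cast this
  have h1 := drift_le (n := n) hβ0 hn hs0 hs2
  have h2 : Real.tanh (β * s) ≤ s := by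
    have := tanh_le_self (x := β * s) (by positivity)
    nlinarith
  have he0 : (0:ℝ) < 1/(n:ℝ) := by positivity
  nlinarith [mul_nonpos_of_nonneg_of_nonpos he0.le (by linarith : Real.tanh (β * s) - s ≤ 0)]

lemma drift_ge_self {β s : ℝ} {n : ℕ} (hβ0 : 0 < β) (hβ1 : β ≤ 1) (hn : 1 ≤ n)
    (hs1 : -1 ≤ s) (hs0 : s < 0) : s ≤ ∫ x, x ∂(magStep β n s) := by
  have hn0 : (0:ℝ) < (n:ℝ) := by
    have : 0 < n := hn
    exact_mod_cast this
  have he0 : (0:ℝ) < 1/(n:ℝ) := by positivity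
  rw [integral_magStep hs1 (by linarith)]
  set P := Real.tanh (β * (s + 1/n)) with hP
  set M := Real.tanh (β * (s - 1/n)) with hM
  set T := Real.tanh (β * s) with hT
  have hPM : 2 * T ≤ P + M := by
    have := tanh_mid' (a := β * s) (h := β * (1/(n:ℝ))) (by nlinarith) (by positivity)
    have e1 : β * s + β * (1/(n:ℝ)) = β * (s + 1/n) := by ring
    have e2 : β * s - β * (1/(n:ℝ)) = β * (s - 1/n) := by ring
    rw [e1, e2] at this
    exact this
  have hMP : M ≤ P := tanh_mono (by nlinarith)
  have hTs : s ≤ T := by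
    have h1 : β * s ≤ 0 := by nlinarith
    have h2 := tanh_ge_self h1
    nlinarith
  unfold pHold pUp pDown pPlus pMinus
  rw [← hP, ← hM]
  have key : 0 ≤ P + M - s*(P-M) - 2*T := by
    nlinarith [mul_nonpos_of_nonpos_of_nonneg hs0.le (sub_nonneg.2 hMP)]
  have hprod := mul_nonneg he0.le key
  have hprod2 := mul_nonneg he0.le (by linarith : (0:ℝ) ≤ T - s)
  have expand : (1 - s) / 2 * ((1 + P) / 2) * (s + 2 / ↑n) + (1 + s) / 2 * ((1 - M) / 2) * (s - 2 / ↑n) +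
      (1 - (1 - s) / 2 * ((1 + P) / 2) - (1 + s) / 2 * ((1 - M) / 2)) * s
      - (s + 1 / ↑n * (T - s)) = (1/2) * (1 / (n:ℝ) * (P + M - s * (P - M) - 2 * T)) := by
    ring
  linarith [expand, hprod, hprod2]


noncomputable def hfun (n : ℕ) : ℝ → ℝ≥0∞ :=
  fun x => if 1/(n:ℝ) < |x| then ENNReal.ofReal |x| else 0

lemma hfun_measurable (n : ℕ) : Measurable (hfun n) := by
  unfold hfun
  exact Measurable.ite (measurableSet_lt measurable_const measurable_abs)
    (ENNReal.measurable_ofReal.comp measurable_abs) measurable_const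

lemma hfun_le_nonneg {n : ℕ} {x : ℝ} (hx : 0 ≤ x) : hfun n x ≤ ENNReal.ofReal x := by
  unfold hfun
  split
  · rw [abs_of_nonneg hx]
  · exact (zero_le)

lemma hfun_le_nonpos {n : ℕ} {x : ℝ} (hx : x ≤ 0) : hfun n x ≤ ENNReal.ofReal (-x) := by
  unfold hfun
  split
  · rw [abs_of_nonpos hx]
  · exact (zero_le)

lemma step_bound {β s : ℝ} {n : ℕ} (hβ0 : 0 < β) (hβ1 : β ≤ 1) (hn : 1 ≤ n)
    (hs1 : -1 ≤ s) (hs2 : s ≤ 1) (h2n : 2/(n:ℝ) ≤ |s|) :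
    ∫⁻ x, hfun n x ∂(magStep β n s) ≤ ENNReal.ofReal |s| := by
  have hn0 : (0:ℝ) < (n:ℝ) := by
    have : 0 < n := hn
    exact_mod_cast this
  have h2pos : (0:ℝ) < 2/(n:ℝ) := by positivity
  rw [lintegral_magStep]
  rcases le_or_gt s 0 with hneg | hpos
  · -- s ≤ -2/n < 0
    have hsneg : s ≤ -(2/(n:ℝ)) := by
      rw [abs_of_nonpos hneg] at h2n; linarith
    have k1 : s + 2/n ≤ 0 := by linarith
    have k2 : s - 2/n ≤ 0 := by linarith
    have k3 : s < 0 := by linarith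
    calc ENNReal.ofReal (pUp β n s) * hfun n (s + 2/n)
          + ENNReal.ofReal (pDown β n s) * hfun n (s - 2/n)
          + ENNReal.ofReal (pHold β n s) * hfun n s
        ≤ ENNReal.ofReal (pUp β n s) * ENNReal.ofReal (-(s + 2/n))
          + ENNReal.ofReal (pDown β n s) * ENNReal.ofReal (-(s - 2/n))
          + ENNReal.ofReal (pHold β n s) * ENNReal.ofReal (-s) := by
          gcongr
          · exact hfun_le_nonpos k1
          · exact hfun_le_nonpos k2
          · exact hfun_le_nonpos k3.le
      _ = ENNReal.ofReal (pUp β n s * (-(s + 2/n)) + pDown β n s * (-(s - 2/n))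
            + pHold β n s * (-s)) := by
          rw [← ENNReal.ofReal_mul (pUp_nonneg hs2), ← ENNReal.ofReal_mul (pDown_nonneg hs1),
            ← ENNReal.ofReal_mul (pHold_nonneg hs1 hs2),
            ← ENNReal.ofReal_add (mul_nonneg (pUp_nonneg hs2) (by linarith))
              (mul_nonneg (pDown_nonneg hs1) (by linarith)),
            ← ENNReal.ofReal_add (add_nonneg (mul_nonneg (pUp_nonneg hs2) (by linarith))
              (mul_nonneg (pDown_nonneg hs1) (by linarith)))
              (mul_nonneg (pHold_nonneg hs1 hs2) (by linarith))]
      _ ≤ ENNReal.ofReal |s| := by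
          rw [abs_of_nonpos hneg]
          apply ENNReal.ofReal_le_ofReal
          have := drift_ge_self (n := n) hβ0 hβ1 hn hs1 k3
          rw [integral_magStep hs1 hs2] at this
          linarith
  · have hspos : 2/(n:ℝ) ≤ s := by rwa [abs_of_pos hpos] at h2n
    have k1 : 0 ≤ s + 2/n := by linarith
    have k2 : 0 ≤ s - 2/n := by linarith
    calc ENNReal.ofReal (pUp β n s) * hfun n (s + 2/n)
          + ENNReal.ofReal (pDown β n s) * hfun n (s - 2/n)
          + ENNReal.ofReal (pHold β n s) * hfun n s
        ≤ ENNReal.ofReal (pUp β n s) * ENNReal.ofReal (s + 2/n)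
          + ENNReal.ofReal (pDown β n s) * ENNReal.ofReal (s - 2/n)
          + ENNReal.ofReal (pHold β n s) * ENNReal.ofReal s := by
          gcongr
          · exact hfun_le_nonneg k1
          · exact hfun_le_nonneg k2
          · exact hfun_le_nonneg hpos.le
      _ = ENNReal.ofReal (pUp β n s * (s + 2/n) + pDown β n s * (s - 2/n)
            + pHold β n s * s) := by
          rw [← ENNReal.ofReal_mul (pUp_nonneg hs2), ← ENNReal.ofReal_mul (pDown_nonneg hs1),
            ← ENNReal.ofReal_mul (pHold_nonneg hs1 hs2),
            ← ENNReal.ofReal_add (mul_nonneg (pUp_nonneg hs2) k1)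
              (mul_nonneg (pDown_nonneg hs1) k2),
            ← ENNReal.ofReal_add (add_nonneg (mul_nonneg (pUp_nonneg hs2) k1)
              (mul_nonneg (pDown_nonneg hs1) k2)) (mul_nonneg (pHold_nonneg hs1 hs2) hpos.le)]
      _ ≤ ENNReal.ofReal |s| := by
          rw [abs_of_pos hpos]
          apply ENNReal.ofReal_le_ofReal
          have := drift_le_self (n := n) hβ0 hβ1 hn hpos hs2
          rw [integral_magStep hs1 hs2] at this
          linarith

noncomputable def Gset (β : ℝ) (n : ℕ) : ℕ → Set ℝ
  | 0 => Set.Icc (-1) 1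
  | (k+1) => {s | s ∈ Gset β n k ∧ magStep β n s (Gset β n k)ᶜ = 0}

lemma Gset_subset_Icc (β : ℝ) (n : ℕ) : ∀ k, Gset β n k ⊆ Set.Icc (-1) 1
  | 0 => fun s hs => hs
  | (k+1) => fun s hs => Gset_subset_Icc β n k hs.1

lemma magStep_apply {β : ℝ} {n : ℕ} (s : ℝ) {A : Set ℝ} (hA : MeasurableSet A) :
    magStep β n s A
      = ENNReal.ofReal (pUp β n s) * A.indicator 1 (s + 2/n)
        + ENNReal.ofReal (pDown β n s) * A.indicator 1 (s - 2/n)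
        + ENNReal.ofReal (pHold β n s) * A.indicator 1 s := by
  simp [magStep, Measure.add_apply, Measure.smul_apply, Measure.dirac_apply' _ hA, smul_eq_mul]

lemma continuous_tanh : Continuous Real.tanh := by
  have : Real.tanh = fun x => Real.sinh x / Real.cosh x :=
    funext fun x => Real.tanh_eq_sinh_div_cosh x
  rw [this]
  exact Real.continuous_sinh.div Real.continuous_cosh (fun x => (Real.cosh_pos x).ne')

lemma continuous_pUp (β : ℝ) (n : ℕ) : Continuous (fun s => pUp β n s) := by
  unfold pUp pPlus
  exact ((continuous_const.sub continuous_id).div_const 2).mul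
    ((continuous_const.add (continuous_tanh.comp
      (continuous_const.mul (continuous_id.add continuous_const)))).div_const 2)

lemma continuous_pDown (β : ℝ) (n : ℕ) : Continuous (fun s => pDown β n s) := by
  unfold pDown pMinus
  exact ((continuous_const.add continuous_id).div_const 2).mul
    ((continuous_const.sub (continuous_tanh.comp
      (continuous_const.mul (continuous_id.sub continuous_const)))).div_const 2)

lemma continuous_pHold (β : ℝ) (n : ℕ) : Continuous (fun s => pHold β n s) := by
  unfold pHold
  exact (continuous_const.sub (continuous_pUp β n)).sub (continuous_pDown β n)

lemma measurable_magStep_apply {β : ℝ} {n : ℕ} {A : Set ℝ} (hA : MeasurableSet A) :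
    Measurable (fun s => magStep β n s A) := by
  simp_rw [magStep_apply _ hA]
  refine Measurable.add (Measurable.add ?_ ?_) ?_
  · exact (ENNReal.measurable_ofReal.comp (continuous_pUp β n).measurable).mul
      ((measurable_one.indicator hA).comp (measurable_id.add_const _))
  · exact (ENNReal.measurable_ofReal.comp (continuous_pDown β n).measurable).mul
      ((measurable_one.indicator hA).comp (measurable_id.sub_const _))
  · exact (ENNReal.measurable_ofReal.comp (continuous_pHold β n).measurable).mul
      (measurable_one.indicator hA)

lemma measurableSet_Gset (β : ℝ) (n : ℕ) : ∀ k, MeasurableSet (Gset β n k)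
  | 0 => measurableSet_Icc
  | (k+1) => by
    have h1 := measurableSet_Gset β n k
    exact h1.inter ((measurable_magStep_apply h1.compl) (measurableSet_singleton 0))

lemma up_mem {β s : ℝ} {n : ℕ} {k : ℕ} (hs : s ∈ Gset β n (k+1)) (hs1 : s < 1) :
    s + 2/n ∈ Gset β n k := by
  by_contra hc
  have hge : ENNReal.ofReal (pUp β n s) * (Gset β n k)ᶜ.indicator 1 (s + 2/n)
      ≤ magStep β n s (Gset β n k)ᶜ := by
    rw [magStep_apply _ (measurableSet_Gset β n k).compl]
    exact le_add_of_le_of_nonneg (le_add_of_le_of_nonneg le_rfl ((zero_le))) ((zero_le))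
  rw [hs.2] at hge
  have hind : (Gset β n k)ᶜ.indicator (1 : ℝ → ℝ≥0∞) (s + 2/n) = 1 :=
    Set.indicator_of_mem (Set.mem_compl hc) (1 : ℝ → ℝ≥0∞)
  rw [hind, mul_one, le_zero_iff, ENNReal.ofReal_eq_zero] at hge
  exact absurd hge (not_le.2 (pUp_pos hs1))

lemma down_mem {β s : ℝ} {n : ℕ} {k : ℕ} (hs : s ∈ Gset β n (k+1)) (hs1 : -1 < s) :
    s - 2/n ∈ Gset β n k := by
  by_contra hc
  have hge : ENNReal.ofReal (pDown β n s) * (Gset β n k)ᶜ.indicator 1 (s - 2/n)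
      ≤ magStep β n s (Gset β n k)ᶜ := by
    rw [magStep_apply _ (measurableSet_Gset β n k).compl]
    exact le_add_of_le_of_nonneg (le_add_of_nonneg_of_le ((zero_le)) le_rfl) ((zero_le))
  rw [hs.2] at hge
  have hind : (Gset β n k)ᶜ.indicator (1 : ℝ → ℝ≥0∞) (s - 2/n) = 1 :=
    Set.indicator_of_mem (Set.mem_compl hc) (1 : ℝ → ℝ≥0∞)
  rw [hind, mul_one, le_zero_iff, ENNReal.ofReal_eq_zero] at hge
  exact absurd hge (not_le.2 (pDown_pos hs1))

lemma Gset_gap {β : ℝ} {n : ℕ} (hn : 1 ≤ n) {s : ℝ} (hs : s ∈ Gset β n n)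
    (h : 1/(n:ℝ) < |s|) : 2/(n:ℝ) ≤ |s| := by
  have hn0 : (0:ℝ) < (n:ℝ) := by
    have : 0 < n := hn
    exact_mod_cast this
  by_contra hc
  push_neg at hc
  rcases lt_or_ge 0 s with hpos | hneg
  · -- 1/n < s < 2/n
    have hs1 : 1/(n:ℝ) < s := by rwa [abs_of_pos hpos] at h
    have hs2 : s < 2/(n:ℝ) := by rwa [abs_of_pos hpos] at hc
    have key : ∀ j, j ≤ n → s + 2*(j:ℝ)/n ∈ Gset β n (n - j) := by
      intro j
      induction j with
      | zero => intro _; simpa using hs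
      | succ i ih =>
        intro hij
        have hmem := ih (Nat.le_of_succ_le hij)
        have hsub : n - i = (n - (i+1)) + 1 := by omega
        rw [hsub] at hmem
        have hIcc := Gset_subset_Icc β n _ hmem
        have hne1 : s + 2*(i:ℝ)/n ≠ 1 := by
          intro he
          have h1 : (n:ℝ)*s = (n:ℝ) - 2*(i:ℝ) := by field_simp at he; linarith
          have h2 : 1 < (n:ℝ)*s := by
            rw [div_lt_iff₀ hn0] at hs1; linarith
          have h3 : (n:ℝ)*s < 2 := by
            rw [lt_div_iff₀ hn0] at hs2; linarith
          have hi1 : (1:ℝ) < ((n:ℤ) - 2*(i:ℤ) : ℤ) := by push_cast; linarith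
          have hi2 : (((n:ℤ) - 2*(i:ℤ) : ℤ) : ℝ) < 2 := by push_cast; linarith
          have hi1' : (1:ℤ) < (n:ℤ) - 2*(i:ℤ) := by exact_mod_cast hi1
          have hi2' : ((n:ℤ) - 2*(i:ℤ)) < 2 := by exact_mod_cast hi2
          omega
        have hup := up_mem hmem (lt_of_le_of_ne hIcc.2 hne1)
        have heq : s + 2*(i:ℝ)/n + 2/n = s + 2*((i:ℝ)+1)/n := by ring
        rw [heq] at hup
        have hcast : s + 2*(((i+1:ℕ)):ℝ)/n = s + 2*((i:ℝ)+1)/n := by push_cast; ring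
        rw [hcast]
        exact hup
    have hfin := key n le_rfl
    have h2 : s + 2*(n:ℝ)/n = s + 2 := by field_simp
    rw [h2, Nat.sub_self] at hfin
    have := (Gset_subset_Icc β n 0 hfin).2
    linarith
  · have hsneg : s < 0 := by
      rcases lt_or_eq_of_le hneg with h' | h'
      · exact h'
      · exfalso
        rw [h'] at h
        simp at h
        have : (0:ℝ) < 1/(n:ℝ) := by positivity
        linarith
    have hs1 : s < -(1/(n:ℝ)) := by rw [abs_of_neg hsneg] at h; linarith
    have hs2 : -(2/(n:ℝ)) < s := by rw [abs_of_neg hsneg] at hc; linarith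
    have key : ∀ j, j ≤ n → s - 2*(j:ℝ)/n ∈ Gset β n (n - j) := by
      intro j
      induction j with
      | zero => intro _; simpa using hs
      | succ i ih =>
        intro hij
        have hmem := ih (Nat.le_of_succ_le hij)
        have hsub : n - i = (n - (i+1)) + 1 := by omega
        rw [hsub] at hmem
        have hIcc := Gset_subset_Icc β n _ hmem
        have hne1 : s - 2*(i:ℝ)/n ≠ -1 := by
          intro he
          have h1 : (n:ℝ)*s = 2*(i:ℝ) - (n:ℝ) := by field_simp at he; linarith
          have h2 : (n:ℝ)*s < -1 := by
            rw [← lt_div_iff₀' hn0]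
            have : -(1/(n:ℝ)) = (-1)/(n:ℝ) := by ring
            linarith [hs1, this ▸ hs1]
          have h3 : -2 < (n:ℝ)*s := by
            have : -(2/(n:ℝ)) = (-2)/(n:ℝ) := by ring
            rw [this, div_lt_iff₀' hn0] at hs2
            linarith
          have hi1 : ((2*(i:ℤ) - (n:ℤ) : ℤ) : ℝ) < -1 := by push_cast; linarith
          have hi2 : (-2:ℝ) < ((2*(i:ℤ) - (n:ℤ) : ℤ) : ℝ) := by push_cast; linarith
          have hi1' : (2*(i:ℤ) - (n:ℤ)) < -1 := by exact_mod_cast hi1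
          have hi2' : (-2:ℤ) < 2*(i:ℤ) - (n:ℤ) := by exact_mod_cast hi2
          omega
        have hdown := down_mem hmem (lt_of_le_of_ne' hIcc.1 hne1)
        have heq : s - 2*(i:ℝ)/n - 2/n = s - 2*((i:ℝ)+1)/n := by ring
        rw [heq] at hdown
        have hcast : s - 2*(((i+1:ℕ)):ℝ)/n = s - 2*((i:ℝ)+1)/n := by push_cast; ring
        rw [hcast]
        exact hdown
    have hfin := key n le_rfl
    have h2 : s - 2*(n:ℝ)/n = s - 2 := by field_simp
    rw [h2, Nat.sub_self] at hfin
    have := (Gset_subset_Icc β n 0 hfin).1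
    linarith

/-- For `0 < β ≤ 1` and `s > 0`, `E[S_{t+1} | S_t = s] ≤ s + (1/n)(tanh(βs) - s)`;
in particular, for a trajectory law `ℙ` of the magnetization chain (i.e. a probability
measure on paths satisfying the Markov property with step kernel `magStep β n`), the map
`t ↦ E[|S_t| 1_{τ₀ > t}]` is non-increasing, where `τ₀` is the first time `|S_t| ≤ 1/n`. -/
theorem magnetization_drift_and_monotone (β : ℝ) (hβ0 : 0 < β) (hβ1 : β ≤ 1)
    (n : ℕ) (hn : 1 ≤ n)
    (ℙ : Measure (ℕ → ℝ)) [IsProbabilityMeasure ℙ]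
    (hval : ℙ {ω | ∀ k, ω k ∈ Set.Icc (-1 : ℝ) 1} = 1)
    (hmarkov : ∀ (t : ℕ) (f : ℝ → ℝ≥0∞), Measurable f →
      ∀ B : Set (Fin (t + 1) → ℝ), MeasurableSet B →
        ∫⁻ ω in (fun ω (k : Fin (t + 1)) => ω (k : ℕ)) ⁻¹' B, f (ω (t + 1)) ∂ℙ
          = ∫⁻ ω in (fun ω (k : Fin (t + 1)) => ω (k : ℕ)) ⁻¹' B,
              ∫⁻ x, f x ∂(magStep β n (ω t)) ∂ℙ) :
    (∀ s : ℝ, 0 < s → s ≤ 1 →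
      ∫ x, x ∂(magStep β n s) ≤ s + (1 / n) * (Real.tanh (β * s) - s)) ∧
    Antitone (fun t : ℕ => ∫ ω in {ω | ∀ k ≤ t, 1 / (n : ℝ) < |ω k|}, |ω t| ∂ℙ) := by
  constructor
  · intro s hs0 hs1
    exact drift_le hβ0 hn hs0 hs1
  -- Antitone part
  set A : ℕ → Set (ℕ → ℝ) := fun t => {ω | ∀ k ≤ t, 1/(n:ℝ) < |ω k|} with hA_def
  have hA : ∀ t, MeasurableSet (A t) := by
    intro t
    have : A t = ⋂ (k : ℕ) (_ : k ≤ t), {ω : ℕ → ℝ | 1/(n:ℝ) < |ω k|} := by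
      ext ω; simp [hA_def]
    rw [this]
    exact MeasurableSet.iInter fun k => MeasurableSet.iInter fun _ =>
      measurableSet_lt measurable_const (measurable_pi_apply k).abs
  have hval' : ∀ᵐ ω ∂ℙ, ∀ k, ω k ∈ Set.Icc (-1:ℝ) 1 := by
    have hmeas : MeasurableSet {ω : ℕ → ℝ | ∀ k, ω k ∈ Set.Icc (-1:ℝ) 1} := by
      have : {ω : ℕ → ℝ | ∀ k, ω k ∈ Set.Icc (-1:ℝ) 1}
          = ⋂ (k : ℕ), (fun ω : ℕ → ℝ => ω k) ⁻¹' Set.Icc (-1:ℝ) 1 := by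
        ext ω; simp
      rw [this]
      exact MeasurableSet.iInter fun k => (measurable_pi_apply k) measurableSet_Icc
    have hc := (prob_compl_eq_zero_iff hmeas).2 hval
    rw [ae_iff]
    simpa [Set.compl_setOf] using hc
  have hGae : ∀ k, ∀ᵐ ω ∂ℙ, ∀ t, ω t ∈ Gset β n k := by
    intro k
    induction k with
    | zero =>
      filter_upwards [hval'] with ω hω t
      exact hω t
    | succ k ih =>
      have hGc : MeasurableSet (Gset β n k)ᶜ := (measurableSet_Gset β n k).compl
      have step : ∀ t : ℕ, ∀ᵐ ω ∂ℙ, magStep β n (ω t) (Gset β n k)ᶜ = 0 := by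
        intro t
        have hf : Measurable ((Gset β n k)ᶜ.indicator (1 : ℝ → ℝ≥0∞)) :=
          measurable_one.indicator hGc
        have hm := hmarkov t _ hf Set.univ MeasurableSet.univ
        rw [Set.preimage_univ, Measure.restrict_univ] at hm
        have hLHS : ∫⁻ ω, (Gset β n k)ᶜ.indicator (1 : ℝ → ℝ≥0∞) (ω (t+1)) ∂ℙ = 0 := by
          have hz : ∀ᵐ ω ∂ℙ, (Gset β n k)ᶜ.indicator (1:ℝ→ℝ≥0∞) (ω (t+1)) = 0 := by
            filter_upwards [ih] with ω hω
            exact Set.indicator_of_notMem (Set.not_notMem.2 (hω (t+1))) _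
          rw [lintegral_congr_ae hz, lintegral_zero]
        rw [hLHS] at hm
        have hinner : (fun ω : ℕ → ℝ => ∫⁻ x, (Gset β n k)ᶜ.indicator (1:ℝ→ℝ≥0∞) x ∂(magStep β n (ω t)))
            = fun ω : ℕ → ℝ => magStep β n (ω t) (Gset β n k)ᶜ := by
          funext ω
          rw [lintegral_indicator hGc]
          simp
        rw [hinner] at hm
        have hg : Measurable (fun ω : ℕ → ℝ => magStep β n (ω t) (Gset β n k)ᶜ) :=
          (measurable_magStep_apply hGc).comp (measurable_pi_apply t)
        have := (lintegral_eq_zero_iff hg).1 hm.symm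
        filter_upwards [this] with ω hω
        exact hω
      have hstepAll : ∀ᵐ ω ∂ℙ, ∀ t, magStep β n (ω t) (Gset β n k)ᶜ = 0 :=
        ae_all_iff.2 step
      filter_upwards [ih, hstepAll] with ω h1 h2 t
      exact ⟨h1 t, h2 t⟩
  -- the lintegral inequality
  apply antitone_nat_of_succ_le
  intro t
  have hrepr : ∀ u : ℕ, ∫ ω in A u, |ω u| ∂ℙ
      = (∫⁻ ω in A u, ENNReal.ofReal |ω u| ∂ℙ).toReal := by
    intro u
    rw [integral_eq_lintegral_of_nonneg_ae (Filter.Eventually.of_forall (fun ω => abs_nonneg _))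
      ((measurable_pi_apply u).abs.aestronglyMeasurable)]
  have hfin : ∀ u : ℕ, (∫⁻ ω in A u, ENNReal.ofReal |ω u| ∂ℙ) ≤ 1 := by
    intro u
    calc ∫⁻ ω in A u, ENNReal.ofReal |ω u| ∂ℙ
        ≤ ∫⁻ _ω in A u, 1 ∂ℙ := by
          apply lintegral_mono_ae
          filter_upwards [ae_restrict_of_ae hval'] with ω hω
          exact ENNReal.ofReal_le_one.2 (abs_le.2 ⟨(hω u).1, (hω u).2⟩)
      _ = ℙ (A u) := setLIntegral_one _
      _ ≤ 1 := prob_le_one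
  have hsetEq : A (t+1) = A t ∩ {ω : ℕ → ℝ | 1/(n:ℝ) < |ω (t+1)|} := by
    ext ω
    constructor
    · intro h
      exact ⟨fun k hk => h k (hk.trans (Nat.le_succ t)), h (t+1) le_rfl⟩
    · rintro ⟨h1, h2⟩ k hk
      rcases Nat.lt_succ_iff_lt_or_eq.1 (Nat.lt_succ_of_le hk) with h' | h'
      · exact h1 k (Nat.lt_succ_iff.1 h')
      · rw [h']; exact h2
  have step1 : ∫⁻ ω in A (t+1), ENNReal.ofReal |ω (t+1)| ∂ℙ
      = ∫⁻ ω in A t, hfun n (ω (t+1)) ∂ℙ := by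
    rw [← lintegral_indicator (hA (t+1)), ← lintegral_indicator (hA t)]
    congr 1
    funext ω
    by_cases h1 : ω ∈ A t
    · by_cases h2 : 1/(n:ℝ) < |ω (t+1)|
      · rw [hsetEq, Set.indicator_of_mem (Set.mem_inter h1 h2), Set.indicator_of_mem h1]
        unfold hfun
        rw [if_pos h2]
      · rw [hsetEq, Set.indicator_of_notMem (fun hmem => h2 hmem.2), Set.indicator_of_mem h1]
        unfold hfun
        rw [if_neg h2]
    · rw [hsetEq, Set.indicator_of_notMem (fun hmem => h1 hmem.1),
        Set.indicator_of_notMem h1]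
  have hBt : MeasurableSet {x : Fin (t+1) → ℝ | ∀ k, 1/(n:ℝ) < |x k|} := by
    have : {x : Fin (t+1) → ℝ | ∀ k, 1/(n:ℝ) < |x k|}
        = ⋂ (k : Fin (t+1)), {x : Fin (t+1) → ℝ | 1/(n:ℝ) < |x k|} := by
      ext x; simp
    rw [this]
    exact MeasurableSet.iInter fun k =>
      measurableSet_lt measurable_const (measurable_pi_apply k).abs
  have hpre : (fun ω (k : Fin (t+1)) => ω (k:ℕ)) ⁻¹' {x : Fin (t+1) → ℝ | ∀ k, 1/(n:ℝ) < |x k|}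
      = A t := by
    ext ω
    simp only [Set.mem_preimage, Set.mem_setOf_eq]
    constructor
    · intro h k hk
      exact h ⟨k, Nat.lt_succ_of_le hk⟩
    · intro h k
      exact h k (Nat.lt_succ_iff.1 k.isLt)
  have step2 : ∫⁻ ω in A t, hfun n (ω (t+1)) ∂ℙ
      = ∫⁻ ω in A t, ∫⁻ x, hfun n x ∂(magStep β n (ω t)) ∂ℙ := by
    have := hmarkov t (hfun n) (hfun_measurable n) _ hBt
    rwa [hpre] at this
  have step3 : ∫⁻ ω in A t, ∫⁻ x, hfun n x ∂(magStep β n (ω t)) ∂ℙ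
      ≤ ∫⁻ ω in A t, ENNReal.ofReal |ω t| ∂ℙ := by
    apply lintegral_mono_ae
    filter_upwards [ae_restrict_of_ae hval', ae_restrict_of_ae (hGae n),
      ae_restrict_mem (hA t)] with ω h1 h2 hAt
    have h1n : 1/(n:ℝ) < |ω t| := hAt t le_rfl
    have h2n := Gset_gap hn (h2 t) h1n
    exact step_bound hβ0 hβ1 hn (h1 t).1 (h1 t).2 h2n
  rw [hrepr, hrepr]
  apply ENNReal.toReal_mono
  · exact ((hfin t).trans_lt ENNReal.one_lt_top).ne
  · rw [step1, step2]
    exact step3
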